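/- With notation as in the orthogonal decomposition above, the linear map W → ℝⁿ/A₁ sending a solution (p,x) ∈ W (i.e. with x(0) = x(1) = 0) to the class of p(1) modulo A₁ is injective, and its image is all of ℝⁿ/A₁; hence it induces a linear isomorphism W ≅ ℝⁿ/A₁. -/

import Mathlib

open Matrix Set

/-- A pair `(p, x)` is a solution on `[0,1]` of Hamilton's equation for
Jacobi fields `ṗ = -Aᵀp + Rx, ẋ = Bp + Ax`. -/
def IsJacobiSol (n : ℕ) (A B R : ℝ → Matrix (Fin n) (Fin n) ℝ)
    (p x : ℝ → Fin n → ℝ) : Prop :=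
  ∀ t ∈ Icc (0:ℝ) 1,
    HasDerivWithinAt p ((-(A t)ᵀ).mulVec (p t) + (R t).mulVec (x t)) (Icc 0 1) t ∧
    HasDerivWithinAt x ((B t).mulVec (p t) + (A t).mulVec (x t)) (Icc 0 1) t

/-- `A₁ = {x(1) : (p,x) solution with x(0) = 0}`. -/
def Aone (n : ℕ) (A B R : ℝ → Matrix (Fin n) (Fin n) ℝ) : Set (Fin n → ℝ) :=
  {v | ∃ p x : ℝ → Fin n → ℝ, IsJacobiSol n A B R p x ∧ x 0 = 0 ∧ x 1 = v}

/-!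
Because `B` and `R` are symmetric, the pairing `ω((p,x),(r,z)) = p ⬝ᵥ z - x ⬝ᵥ r` is constant
along any two solutions. If `(p,x) ∈ W` and `p(1) = z(1)` for a solution `(r,z)` with `z(0) = 0`,
comparing `ω` at `t = 0` and `t = 1` gives `p(1) ⬝ᵥ p(1) = 0`; so `(p,x)` vanishes at `t = 1`, hence
everywhere. Onto is a dimension count: with `X : p(0) ↦ x(1)` on solutions with `x(0) = 0` we have
`W ≅ ker X` and `A₁ = range X`, so `dim W = n - dim A₁ = dim (ℝⁿ ⧸ A₁)`.
-/

open scoped NNReal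

section LinearODE

variable {E : Type*} [NormedAddCommGroup E] [NormedSpace ℝ E] {G : ℝ → E →L[ℝ] E}
  {f g : ℝ → E} {s : Set ℝ}

lemma exists_nnnorm_le_of_continuousOn_Icc {a b : ℝ} (hG : ContinuousOn G (Icc a b)) :
    ∃ K : ℝ≥0, ∀ t ∈ Icc a b, ‖G t‖₊ ≤ K := by
  obtain ⟨K, hK⟩ := (isCompact_Icc.image_of_continuousOn hG.nnnorm).bddAbove
  exact ⟨K, fun t ht ↦ hK (mem_image_of_mem _ ht)⟩

lemma IsIntegralCurveOn.add (hf : IsIntegralCurveOn f (fun t ↦ G t) s)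
    (hg : IsIntegralCurveOn g (fun t ↦ G t) s) : IsIntegralCurveOn (f + g) (fun t ↦ G t) s :=
  fun t ht ↦ by simpa only [Pi.add_apply, map_add] using (hf t ht).add (hg t ht)

lemma IsIntegralCurveOn.sub (hf : IsIntegralCurveOn f (fun t ↦ G t) s)
    (hg : IsIntegralCurveOn g (fun t ↦ G t) s) : IsIntegralCurveOn (f - g) (fun t ↦ G t) s :=
  fun t ht ↦ by simpa only [Pi.sub_apply, map_sub] using (hf t ht).sub (hg t ht)

lemma IsIntegralCurveOn.const_smul (c : ℝ) (hf : IsIntegralCurveOn f (fun t ↦ G t) s) :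
    IsIntegralCurveOn (c • f) (fun t ↦ G t) s :=
  fun t ht ↦ by simpa only [Pi.smul_apply, map_smul] using (hf t ht).const_smul c

lemma IsIntegralCurveOn.piecewise_Iic {v : ℝ → E → E} {a m b : ℝ} (ham : a ≤ m) (hmb : m ≤ b)
    (hf : IsIntegralCurveOn f v (Icc a m)) (hg : IsIntegralCurveOn g v (Icc m b))
    (hfg : f m = g m) : IsIntegralCurveOn ((Iic m).piecewise f g) v (Icc a b) := by
  set h := (Iic m).piecewise f g
  have piece : ∀ {φ : ℝ → E} {c d : ℝ}, IsIntegralCurveOn φ v (Icc c d) →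
      EqOn h φ (Icc c d) → ∀ t, HasDerivWithinAt h (v t (h t)) (Icc c d) t := by
    intro φ c d hφ hhφ t
    by_cases ht : t ∈ Icc c d
    · rw [hhφ ht]
      exact (hφ t ht).congr_of_mem hhφ ht
    · exact HasFDerivWithinAt.of_notMem_closure (by rwa [closure_Icc])
  have hhf : EqOn h f (Icc a m) := fun t ht ↦ piecewise_eq_of_mem _ _ _ ht.2
  have hhg : EqOn h g (Icc m b) := fun t ht ↦ by
    rcases ht.1.eq_or_lt with rfl | hlt
    · exact (piecewise_eq_of_mem (Iic m) f g self_mem_Iic).trans hfg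
    · exact piecewise_eq_of_notMem _ _ _ (not_le.mpr hlt)
  intro t _
  rw [← Icc_union_Icc_eq_Icc ham hmb]
  exact (piece hf hhf t).union (piece hg hhg t)

lemma IsIntegralCurveOn.eqOn_Icc {a b t₀ : ℝ} (hG : ContinuousOn G (Icc a b))
    (hf : IsIntegralCurveOn f (fun t ↦ G t) (Icc a b))
    (hg : IsIntegralCurveOn g (fun t ↦ G t) (Icc a b)) (ht₀ : t₀ ∈ Icc a b)
    (h : f t₀ = g t₀) : EqOn f g (Icc a b) := by
  obtain ⟨K, hK⟩ := exists_nnnorm_le_of_continuousOn_Icc hG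
  have hLip : ∀ t ∈ Icc a b, LipschitzOnWith K (G t) univ :=
    fun t ht ↦ ((G t).lipschitz.weaken (hK t ht)).lipschitzOnWith
  have right : ∀ {φ : ℝ → E}, IsIntegralCurveOn φ (fun t ↦ G t) (Icc a b) →
      ∀ t ∈ Ico t₀ b, HasDerivWithinAt φ (G t (φ t)) (Ici t) t := fun hφ t ht ↦
    (hφ t ⟨ht₀.1.trans ht.1, ht.2.le⟩).mono_of_mem_nhdsWithin
      (Icc_mem_nhdsGE_of_mem ⟨ht₀.1.trans ht.1, ht.2⟩)
  have left : ∀ {φ : ℝ → E}, IsIntegralCurveOn φ (fun t ↦ G t) (Icc a b) →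
      ∀ t ∈ Ioc a t₀, HasDerivWithinAt φ (G t (φ t)) (Iic t) t := fun hφ t ht ↦
    (hφ t ⟨ht.1.le, ht.2.trans ht₀.2⟩).mono_of_mem_nhdsWithin
      (Icc_mem_nhdsLE_of_mem ⟨ht.1, ht.2.trans ht₀.2⟩)
  rw [← Icc_union_Icc_eq_Icc ht₀.1 ht₀.2]
  refine EqOn.union ?_ ?_
  · have hsub : Icc a t₀ ⊆ Icc a b := Icc_subset_Icc_right ht₀.2
    exact ODE_solution_unique_of_mem_Icc_left (fun t ht ↦ hLip t (hsub (Ioc_subset_Icc_self ht)))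
      (hf.continuousOn.mono hsub) (left hf) (fun _ _ ↦ mem_univ _)
      (hg.continuousOn.mono hsub) (left hg) (fun _ _ ↦ mem_univ _) h
  · have hsub : Icc t₀ b ⊆ Icc a b := Icc_subset_Icc_left ht₀.1
    exact ODE_solution_unique_of_mem_Icc_right (fun t ht ↦ hLip t (hsub (Ico_subset_Icc_self ht)))
      (hf.continuousOn.mono hsub) (right hf) (fun _ _ ↦ mem_univ _)
      (hg.continuousOn.mono hsub) (right hg) (fun _ _ ↦ mem_univ _) h

variable [CompleteSpace E]

lemma exists_isIntegralCurveOn_Icc_of_two_mul_le {a b : ℝ} (hab : a ≤ b) {K : ℝ≥0}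
    (hG : ContinuousOn G (Icc a b)) (hK : ∀ t ∈ Icc a b, ‖G t‖₊ ≤ K)
    (hsmall : 2 * K * (b - a) ≤ 1) (x₀ : E) :
    ∃ f : ℝ → E, f a = x₀ ∧ IsIntegralCurveOn f (fun t ↦ G t) (Icc a b) := by
  -- on the ball of radius `‖x₀‖` about `x₀` the field is bounded by `2 K ‖x₀‖`
  have hPL : IsPicardLindelof (fun t ↦ G t) (⟨a, le_rfl, hab⟩ : Icc a b) x₀ ‖x₀‖₊ 0
      (2 * K * ‖x₀‖₊) K := by
    refine ⟨fun t ht ↦ ((G t).lipschitz.weaken (hK t ht)).lipschitzOnWith,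
      fun x _ ↦ (ContinuousLinearMap.apply ℝ E x).continuous.comp_continuousOn hG,
      fun t ht x hx ↦ ?_, ?_⟩
    · have hx' : ‖x‖ ≤ 2 * ‖x₀‖ := by
        have := norm_le_norm_add_norm_sub' x x₀
        rw [mem_closedBall_iff_norm] at hx
        push_cast at hx
        linarith
      have hKt : ‖G t‖ ≤ K := hK t ht
      calc ‖G t x‖ ≤ ‖G t‖ * ‖x‖ := (G t).le_opNorm x
        _ ≤ K * (2 * ‖x₀‖) := by gcongr
        _ = _ := by push_cast; ring
    · simp only [sub_self, max_eq_left (sub_nonneg.mpr hab), NNReal.coe_zero, sub_zero]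
      push_cast
      have := mul_le_mul_of_nonneg_right hsmall (norm_nonneg x₀)
      linarith
  exact hPL.exists_eq_forall_mem_Icc_hasDerivWithinAt₀

lemma exists_isIntegralCurveOn_Icc {a b : ℝ} (hab : a ≤ b) (hG : ContinuousOn G (Icc a b))
    (x₀ : E) : ∃ f : ℝ → E, f a = x₀ ∧ IsIntegralCurveOn f (fun t ↦ G t) (Icc a b) := by
  obtain ⟨K, hK⟩ := exists_nnnorm_le_of_continuousOn_Icc hG
  set δ : ℝ := (2 * K + 1)⁻¹
  have hδ : 0 < δ := by positivity
  have hKδ : 2 * K * δ ≤ 1 := by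
    rw [← div_eq_mul_inv, div_le_one (by positivity)]
    linarith
  -- march to the right in steps of length `δ`, on which Picard–Lindelöf applies
  have march : ∀ k : ℕ, ∀ c ∈ Icc a b, c ≤ a + k * δ →
      ∃ f : ℝ → E, f a = x₀ ∧ IsIntegralCurveOn f (fun t ↦ G t) (Icc a c) := by
    intro k
    induction k with
    | zero =>
      intro c hc hca
      have hc' : c = a := le_antisymm (by simpa using hca) hc.1
      subst hc'
      exact exists_isIntegralCurveOn_Icc_of_two_mul_le le_rfl (hG.mono (Icc_subset_Icc_right hc.2))
        (fun t ht ↦ hK t (Icc_subset_Icc_right hc.2 ht)) (by simp) x₀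
    | succ k ih =>
      intro c hc hca
      set m := max a (c - δ)
      have ham : a ≤ m := le_max_left _ _
      have hmc : m ≤ c := max_le hc.1 (by linarith)
      obtain ⟨f, hfa, hf⟩ := ih m ⟨ham, hmc.trans hc.2⟩
        (max_le (le_add_of_nonneg_right (by positivity)) (by push_cast at hca; linarith))
      have hsub : Icc m c ⊆ Icc a b := Icc_subset_Icc ham hc.2
      have hcm : 2 * K * (c - m) ≤ 1 :=
        calc 2 * K * (c - m) ≤ 2 * K * δ := by gcongr; linarith [le_max_right a (c - δ)]
          _ ≤ 1 := hKδ
      obtain ⟨g, hgm, hg⟩ := exists_isIntegralCurveOn_Icc_of_two_mul_le hmc (hG.mono hsub)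
        (fun t ht ↦ hK t (hsub ht)) hcm (f m)
      exact ⟨_, by rwa [piecewise_eq_of_mem _ _ _ (mem_Iic.2 ham)],
        hf.piecewise_Iic ham hmc hg hgm.symm⟩
  obtain ⟨k, hk⟩ := exists_nat_ge ((b - a) / δ)
  exact march k b ⟨hab, le_rfl⟩ (by rw [div_le_iff₀ hδ] at hk; linarith)

lemma exists_linearMap_apply_eq_of_isIntegralCurveOn_Icc {a b : ℝ} (hab : a ≤ b)
    (hG : ContinuousOn G (Icc a b)) :
    ∃ L : E →ₗ[ℝ] E,
      ∀ f : ℝ → E, IsIntegralCurveOn f (fun t ↦ G t) (Icc a b) → f b = L (f a) := by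
  choose sol hsol_a hsol using exists_isIntegralCurveOn_Icc hab hG
  have hb : b ∈ Icc a b := ⟨hab, le_rfl⟩
  have eq_sol : ∀ f : ℝ → E, IsIntegralCurveOn f (fun t ↦ G t) (Icc a b) → f b = sol (f a) b :=
    fun f hf ↦ hf.eqOn_Icc hG (hsol _) ⟨le_rfl, hab⟩ (hsol_a _).symm hb
  refine ⟨{ toFun := fun x ↦ sol x b, map_add' := fun x y ↦ ?_, map_smul' := fun c x ↦ ?_ },
    eq_sol⟩
  · simpa [hsol_a] using (eq_sol _ ((hsol x).add (hsol y))).symm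
  · simpa [hsol_a] using (eq_sol _ ((hsol x).const_smul c)).symm

end LinearODE

lemma HasDerivWithinAt.dotProduct {ι : Type*} [Fintype ι] {p q : ℝ → ι → ℝ} {p' q' : ι → ℝ}
    {s : Set ℝ} {t : ℝ} (hp : HasDerivWithinAt p p' s t) (hq : HasDerivWithinAt q q' s t) :
    HasDerivWithinAt (fun τ ↦ p τ ⬝ᵥ q τ) (p' ⬝ᵥ q t + p t ⬝ᵥ q') s t := by
  have hi : ∀ i, HasDerivWithinAt (fun τ ↦ p τ i * q τ i) (p' i * q t i + p t i * q' i) s t :=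
    fun i ↦ (hasDerivWithinAt_pi.1 hp i).mul (hasDerivWithinAt_pi.1 hq i)
  have := HasDerivWithinAt.fun_sum (u := Finset.univ) fun i _ ↦ hi i
  simpa [_root_.dotProduct, Finset.sum_add_distrib] using this

lemma mulVec_dotProduct_eq_dotProduct_transpose_mulVec {ι κ R : Type*} [Fintype ι] [Fintype κ]
    [CommSemiring R] (M : Matrix ι κ R) (a : κ → R) (b : ι → R) : (M *ᵥ a) ⬝ᵥ b = a ⬝ᵥ Mᵀ *ᵥ b := by
  rw [dotProduct_transpose_mulVec, dotProduct_comm]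

section Jacobi

variable {n : ℕ} (A B R : ℝ → Matrix (Fin n) (Fin n) ℝ)

noncomputable def jacobiField (t : ℝ) :
    ((Fin n → ℝ) × (Fin n → ℝ)) →L[ℝ] ((Fin n → ℝ) × (Fin n → ℝ)) :=
  LinearMap.toContinuousLinearMap <|
    ((-(A t)ᵀ).mulVecLin.coprod (R t).mulVecLin).prod ((B t).mulVecLin.coprod (A t).mulVecLin)

lemma jacobiField_apply (t : ℝ) (p x : Fin n → ℝ) :
    jacobiField A B R t (p, x) = (-(A t)ᵀ *ᵥ p + R t *ᵥ x, B t *ᵥ p + A t *ᵥ x) := rfl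

variable {A B R}

lemma continuous_jacobiField (hA : Continuous A) (hB : Continuous B) (hR : Continuous R) :
    Continuous (jacobiField A B R) := by
  refine continuous_clm_apply.2 fun u ↦ ?_
  exact ((hA.matrix_transpose.neg.matrix_mulVec continuous_const).add
    (hR.matrix_mulVec continuous_const)).prodMk
    ((hB.matrix_mulVec continuous_const).add (hA.matrix_mulVec continuous_const))

lemma isJacobiSol_iff {p x : ℝ → Fin n → ℝ} :
    IsJacobiSol n A B R p x ↔
      IsIntegralCurveOn (fun t ↦ (p t, x t)) (fun t ↦ jacobiField A B R t) (Icc 0 1) :=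
  ⟨fun h t ht ↦ (h t ht).1.prodMk (h t ht).2, fun h t ht ↦ ⟨(h t ht).fst, (h t ht).snd⟩⟩

def symplecticPairing (u v : (Fin n → ℝ) × (Fin n → ℝ)) : ℝ := u.1 ⬝ᵥ v.2 - u.2 ⬝ᵥ v.1

lemma symplecticPairing_jacobiField_add (hBsymm : ∀ t, (B t).IsSymm)
    (hRsymm : ∀ t, (R t).IsSymm) (t : ℝ) (u v : (Fin n → ℝ) × (Fin n → ℝ)) :
    symplecticPairing (jacobiField A B R t u) v +
      symplecticPairing u (jacobiField A B R t v) = 0 := by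
  obtain ⟨p, x⟩ := u
  obtain ⟨r, z⟩ := v
  simp only [symplecticPairing, jacobiField_apply, add_dotProduct, dotProduct_add, neg_mulVec,
    neg_dotProduct, dotProduct_neg, mulVec_dotProduct_eq_dotProduct_transpose_mulVec,
    transpose_transpose, (hBsymm t).eq, (hRsymm t).eq]
  ring

lemma symplecticPairing_eq_of_isIntegralCurveOn (hBsymm : ∀ t, (B t).IsSymm)
    (hRsymm : ∀ t, (R t).IsSymm) {u v : ℝ → (Fin n → ℝ) × (Fin n → ℝ)}
    (hu : IsIntegralCurveOn u (fun t ↦ jacobiField A B R t) (Icc 0 1))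
    (hv : IsIntegralCurveOn v (fun t ↦ jacobiField A B R t) (Icc 0 1)) :
    symplecticPairing (u 1) (v 1) = symplecticPairing (u 0) (v 0) := by
  have hderiv : ∀ t ∈ Icc (0 : ℝ) 1,
      HasDerivWithinAt (fun τ ↦ symplecticPairing (u τ) (v τ)) 0 (Icc 0 1) t := by
    intro t ht
    have := (HasDerivWithinAt.dotProduct (hu t ht).fst (hv t ht).snd).sub
      (HasDerivWithinAt.dotProduct (hu t ht).snd (hv t ht).fst)
    refine this.congr_deriv ?_
    have skew := symplecticPairing_jacobiField_add (A := A) hBsymm hRsymm t (u t) (v t)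
    unfold symplecticPairing at skew
    linear_combination skew
  exact constant_of_has_deriv_right_zero (fun t ht ↦ (hderiv t ht).continuousWithinAt)
    (fun t ht ↦ (hderiv t (Ico_subset_Icc_self ht)).mono_of_mem_nhdsWithin
      (Icc_mem_nhdsGE_of_mem ht)) 1 ⟨zero_le_one, le_rfl⟩

lemma exists_isJacobiSol (hA : Continuous A) (hB : Continuous B) (hR : Continuous R)
    (p₀ x₀ : Fin n → ℝ) :
    ∃ p x : ℝ → Fin n → ℝ, IsJacobiSol n A B R p x ∧ p 0 = p₀ ∧ x 0 = x₀ := by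
  obtain ⟨u, hu0, hu⟩ := exists_isIntegralCurveOn_Icc zero_le_one
    (continuous_jacobiField hA hB hR).continuousOn (p₀, x₀)
  exact ⟨fun t ↦ (u t).1, fun t ↦ (u t).2, isJacobiSol_iff.2 hu, by simp [hu0], by simp [hu0]⟩

lemma exists_linearMap_isJacobiSol_apply_one (hA : Continuous A) (hB : Continuous B)
    (hR : Continuous R) : ∃ P X : (Fin n → ℝ) →ₗ[ℝ] (Fin n → ℝ), ∀ p x : ℝ → Fin n → ℝ,
      IsJacobiSol n A B R p x → x 0 = 0 → p 1 = P (p 0) ∧ x 1 = X (p 0) := by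
  obtain ⟨L, hL⟩ := exists_linearMap_apply_eq_of_isIntegralCurveOn_Icc zero_le_one
    (continuous_jacobiField hA hB hR).continuousOn
  refine ⟨LinearMap.fst ℝ _ _ ∘ₗ L ∘ₗ LinearMap.inl ℝ _ _,
    LinearMap.snd ℝ _ _ ∘ₗ L ∘ₗ LinearMap.inl ℝ _ _, fun p x h hx0 ↦ ?_⟩
  have := hL _ (isJacobiSol_iff.1 h)
  simp only [hx0] at this
  simp [← this]

lemma Aone_eq_range (hA : Continuous A) (hB : Continuous B) (hR : Continuous R)
    {X : (Fin n → ℝ) →ₗ[ℝ] (Fin n → ℝ)} (hX : ∀ p x : ℝ → Fin n → ℝ,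
      IsJacobiSol n A B R p x → x 0 = 0 → x 1 = X (p 0)) :
    Aone n A B R = LinearMap.range X := by
  ext v
  constructor
  · rintro ⟨p, x, h, hx0, rfl⟩
    exact ⟨p 0, (hX p x h hx0).symm⟩
  · rintro ⟨k, rfl⟩
    obtain ⟨p, x, h, rfl, hx0⟩ := exists_isJacobiSol hA hB hR k 0
    exact ⟨p, x, h, hx0, hX p x h hx0⟩

lemma IsJacobiSol.eq_zero_of_mem_Aone (hA : Continuous A) (hB : Continuous B)
    (hR : Continuous R) (hBsymm : ∀ t, (B t).IsSymm) (hRsymm : ∀ t, (R t).IsSymm)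
    {p x : ℝ → Fin n → ℝ} (h : IsJacobiSol n A B R p x) (hx0 : x 0 = 0) (hx1 : x 1 = 0)
    (hp1 : p 1 ∈ Aone n A B R) : ∀ t ∈ Icc (0 : ℝ) 1, p t = 0 ∧ x t = 0 := by
  obtain ⟨r, z, hrz, hz0, hzp⟩ := hp1
  have hω := symplecticPairing_eq_of_isIntegralCurveOn hBsymm hRsymm
    (isJacobiSol_iff.1 h) (isJacobiSol_iff.1 hrz)
  simp only [symplecticPairing, hx0, hx1, hz0, hzp, dotProduct_zero, zero_dotProduct,
    sub_zero] at hω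
  have hp1 : p 1 = 0 := dotProduct_self_eq_zero.1 hω
  have hzero : IsIntegralCurveOn (fun _ ↦ 0) (fun t ↦ jacobiField A B R t) (Icc 0 1) :=
    (isIntegralCurve_const fun t ↦ map_zero _).isIntegralCurveOn _
  intro t ht
  simpa using (isJacobiSol_iff.1 h).eqOn_Icc (continuous_jacobiField hA hB hR).continuousOn
    hzero ⟨zero_le_one, le_rfl⟩ (by simp [hp1, hx1]) ht

end Jacobi

lemma exists_mem_ker_sub_mem_range_of_finrank_eq {K V W : Type*} [Field K] [AddCommGroup V]
    [Module K V] [AddCommGroup W] [Module K W] [FiniteDimensional K V] [FiniteDimensional K W]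
    (hVW : Module.finrank K V = Module.finrank K W) (P X : V →ₗ[K] W)
    (hPX : ∀ k ∈ LinearMap.ker X, P k ∈ LinearMap.range X → k = 0) (w : W) :
    ∃ k ∈ LinearMap.ker X, w - P k ∈ LinearMap.range X := by
  set f : LinearMap.ker X →ₗ[K] W ⧸ LinearMap.range X :=
    (LinearMap.range X).mkQ ∘ₗ P ∘ₗ (LinearMap.ker X).subtype
  have hf : Function.Injective f := by
    refine (injective_iff_map_eq_zero f).2 fun ⟨k, hk⟩ hfk ↦ Subtype.ext (hPX k hk ?_)
    simpa [f] using hfk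
  have hdim : Module.finrank K (LinearMap.ker X) = Module.finrank K (W ⧸ LinearMap.range X) := by
    have := X.finrank_range_add_finrank_ker
    have := (LinearMap.range X).finrank_quotient_add_finrank
    omega
  obtain ⟨⟨k, hk⟩, hfk⟩ :=
    (LinearMap.injective_iff_surjective_of_finrank_eq_finrank hdim).1 hf ((LinearMap.range X).mkQ w)
  exact ⟨k, hk, (Submodule.Quotient.eq _).1 hfk.symm⟩

/-- Warner's regularity condition (R2) in coordinates: the map `W → ℝⁿ/A₁`,
`(p,x) ↦ [p(1)]`, is injective and onto, hence a linear isomorphism. -/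
theorem stmt_3 {n : ℕ} (A B R : ℝ → Matrix (Fin n) (Fin n) ℝ)
    (hA : Continuous A) (hB : Continuous B) (hR : Continuous R)
    (hBsymm : ∀ t, (B t).IsSymm) (hRsymm : ∀ t, (R t).IsSymm) :
    -- injectivity: two elements of `W` whose values `p(1)` agree modulo `A₁` coincide
    (∀ p x q y : ℝ → Fin n → ℝ,
      IsJacobiSol n A B R p x → x 0 = 0 → x 1 = 0 →
      IsJacobiSol n A B R q y → y 0 = 0 → y 1 = 0 →
      p 1 - q 1 ∈ Aone n A B R →
      ∀ t ∈ Icc (0:ℝ) 1, p t = q t ∧ x t = y t) ∧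
    -- surjectivity onto the quotient `ℝⁿ/A₁`
    (∀ v : Fin n → ℝ, ∃ p x : ℝ → Fin n → ℝ,
      IsJacobiSol n A B R p x ∧ x 0 = 0 ∧ x 1 = 0 ∧ v - p 1 ∈ Aone n A B R) := by
  refine ⟨fun p x q y hpx hx0 hx1 hqy hy0 hy1 hpq t ht ↦ ?_, fun v ↦ ?_⟩
  · have hdiff : IsJacobiSol n A B R (p - q) (x - y) :=
      isJacobiSol_iff.2 ((isJacobiSol_iff.1 hpx).sub (isJacobiSol_iff.1 hqy))
    obtain ⟨hp, hx⟩ := hdiff.eq_zero_of_mem_Aone hA hB hR hBsymm hRsymm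
      (by simp [hx0, hy0]) (by simp [hx1, hy1]) hpq t ht
    exact ⟨sub_eq_zero.1 hp, sub_eq_zero.1 hx⟩
  · obtain ⟨P, X, hPX⟩ := exists_linearMap_isJacobiSol_apply_one hA hB hR
    have hAone : Aone n A B R = LinearMap.range X :=
      Aone_eq_range hA hB hR fun p x h hx0 ↦ (hPX p x h hx0).2
    -- a solution starting at `(k, 0)` lies in `W` iff `X k = 0`, and its `p(1)` is `P k`
    have hW : ∀ k ∈ LinearMap.ker X, P k ∈ LinearMap.range X → k = 0 := by
      intro k hk hPk
      obtain ⟨p, x, h, rfl, hx0⟩ := exists_isJacobiSol hA hB hR k 0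
      obtain ⟨hp1, hx1⟩ := hPX p x h hx0
      exact (h.eq_zero_of_mem_Aone hA hB hR hBsymm hRsymm hx0 (hx1.trans hk)
        (hp1 ▸ hAone ▸ hPk) 0 ⟨le_rfl, zero_le_one⟩).1
    obtain ⟨k, hk, hvk⟩ := exists_mem_ker_sub_mem_range_of_finrank_eq rfl P X hW v
    obtain ⟨p, x, h, rfl, hx0⟩ := exists_isJacobiSol hA hB hR k 0
    obtain ⟨hp1, hx1⟩ := hPX p x h hx0
    exact ⟨p, x, h, hx0, hx1.trans hk, hp1 ▸ hAone ▸ hvk⟩
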